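/- Let f : T → ℝ be measurable and let F : T → X be strongly measurable and B1-integrable on T with respect to μ, and set M(A) := ∫_A F dμ for A ∈ 𝒜. Then the product t ↦ f(t) F(t) is strongly measurable, and for every ε > 0 there exists a countable measurable partition P of T such that for every countable measurable partition {E_k}_{k∈ℕ} of T finer than P and every choice of points t_k ∈ E_k, one has ∑_k ‖f(t_k) F(t_k) μ(E_k) − f(t_k) M(E_k)‖ ≤ 2ε. -/

import Mathlib

/-!
On a piece of a partition where `F` stays within `δ` of a vector `x`, every Riemann sum of `F` is
within `δ μ(A)` of `μ(A) x`, hence so is the `B₁`-integral. Partitioning `T` first into pieces on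
which `f` is bounded by some `c`, and each of them into pieces on which `F` oscillates by less
than `δ / c`, each term of the sum is at most `δ μ(E_k)`, and these add up to at most `δ μ(T)`.
-/

open MeasureTheory Filter

/-- A countable measurable partition of the set `A`: a countable family of pairwise
disjoint measurable sets whose union is `A` (empty pieces are allowed so that
finite partitions are covered; empty pieces contribute nothing). -/
structure MPartition {T : Type*} [MeasurableSpace T] (A : Set T) where
  piece : ℕ → Set T
  measurable : ∀ n, MeasurableSet (piece n)
  disj : Pairwise (Function.onFun Disjoint piece)
  cover : (⋃ n, piece n) = A

/-- `P'` is finer than `P` if every piece of `P'` is contained in some piece of `P`. -/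
def MPartition.Finer {T : Type*} [MeasurableSpace T] {A : Set T}
    (P' P : MPartition A) : Prop :=
  ∀ j, ∃ n, P'.piece j ⊆ P.piece n

/-- A choice of tag points, one in each nonempty piece of the partition. -/
def MPartition.IsTagging {T : Type*} [MeasurableSpace T] {A : Set T}
    (P : MPartition A) (t : ℕ → T) : Prop :=
  ∀ n, (P.piece n).Nonempty → t n ∈ P.piece n

/-- `F : T → X` is `B₁`-integrable on `A` w.r.t. the (finite, nonnegative) measure `μ`,
with integral `I`. -/
def B1IntegralOn {T X : Type*} [MeasurableSpace T] [NormedAddCommGroup X]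
    [NormedSpace ℝ X] (F : T → X) (μ : Measure T) (A : Set T) (I : X) : Prop :=
  ∀ ε > (0 : ℝ), ∃ P₀ : MPartition A, ∀ P : MPartition A, P.Finer P₀ →
    ∀ t : ℕ → T, P.IsTagging t →
      limsup (fun n => ‖(∑ i ∈ Finset.range n, (μ (P.piece i)).toReal • F (t i)) - I‖)
        atTop ≤ ε

/-- `f : T → ℝ` is `B₂`-integrable on `A` w.r.t. the countably additive vector
measure `m`, with integral `I`. -/
def B2IntegralOn {T X : Type*} [MeasurableSpace T] [NormedAddCommGroup X]
    [NormedSpace ℝ X] (f : T → ℝ) (m : VectorMeasure T X) (A : Set T) (I : X) : Prop :=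
  ∀ ε > (0 : ℝ), ∃ P₀ : MPartition A, ∀ P : MPartition A, P.Finer P₀ →
    ∀ t : ℕ → T, P.IsTagging t →
      limsup (fun n => ‖(∑ i ∈ Finset.range n, f (t i) • m (P.piece i)) - I‖)
        atTop ≤ ε

open Set

namespace MPartition

variable {T : Type*} [MeasurableSpace T] {A : Set T}

lemma piece_subset (P : MPartition A) (n : ℕ) : P.piece n ⊆ A :=
  (subset_iUnion P.piece n).trans P.cover.subset

lemma exists_isTagging [Nonempty T] (P : MPartition A) : ∃ t, P.IsTagging t := by
  have h (n : ℕ) : ∃ t : T, (P.piece n).Nonempty → t ∈ P.piece n := by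
    rcases (P.piece n).eq_empty_or_nonempty with hn | ⟨t, ht⟩
    · exact ⟨Classical.arbitrary T, by simp [hn]⟩
    · exact ⟨t, fun _ => ht⟩
  choose t ht using h
  exact ⟨t, ht⟩

lemma hasSum_measure_toReal (P : MPartition A) (μ : Measure T) [IsFiniteMeasure μ] :
    HasSum (fun n => (μ (P.piece n)).toReal) (μ A).toReal := by
  have hA : μ A = ∑' n, μ (P.piece n) := by
    rw [← measure_iUnion P.disj P.measurable, P.cover]
  have h := ENNReal.hasSum_toReal (hA ▸ measure_ne_top μ A)
  rwa [← ENNReal.tsum_toReal_eq fun n => measure_ne_top μ _, ← hA] at h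

lemma sum_measure_toReal_le (P : MPartition A) (μ : Measure T) [IsFiniteMeasure μ] (n : ℕ) :
    ∑ k ∈ Finset.range n, (μ (P.piece k)).toReal ≤ (μ A).toReal :=
  sum_le_hasSum _ (fun _ _ => ENNReal.toReal_nonneg) (P.hasSum_measure_toReal μ)

def ofDisjointed (s : ℕ → Set T) (hs : ∀ n, MeasurableSet (s n)) (hA : ⋃ n, s n = A) :
    MPartition A where
  piece := disjointed s
  measurable := MeasurableSet.disjointed hs
  disj := disjoint_disjointed s
  cover := iUnion_disjointed.trans hA

/-- The piece `P m ∩ Q m j` gets the index `Nat.pair m j`. -/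
def bind (P : MPartition A) (Q : ℕ → MPartition (univ : Set T)) : MPartition A where
  piece n := P.piece n.unpair.1 ∩ (Q n.unpair.1).piece n.unpair.2
  measurable n := (P.measurable _).inter ((Q _).measurable _)
  disj a b hab := by
    by_cases h₁ : a.unpair.1 = b.unpair.1
    · have h₂ : a.unpair.2 ≠ b.unpair.2 := fun h₂ =>
        hab (by rw [← Nat.pair_unpair a, ← Nat.pair_unpair b, h₁, h₂])
      exact ((Q _).disj h₂).mono inter_subset_right (h₁ ▸ inter_subset_right)
    · exact (P.disj h₁).mono inter_subset_left inter_subset_left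
  cover := by
    refine Subset.antisymm (iUnion_subset fun n => inter_subset_left.trans (P.piece_subset _))
      fun u hu => ?_
    obtain ⟨m, hm⟩ := mem_iUnion.1 (P.cover.symm ▸ hu)
    obtain ⟨j, hj⟩ := mem_iUnion.1 ((Q m).cover.symm ▸ mem_univ u)
    exact mem_iUnion.2 ⟨Nat.pair m j, by simpa only [Nat.unpair_pair] using ⟨hm, hj⟩⟩

end MPartition

section

variable {T X : Type*} [MeasurableSpace T]

theorem MeasureTheory.StronglyMeasurable.exists_mpartition_subset_preimage_ball
    {Y : Type*} [PseudoMetricSpace Y] [Nonempty Y] {F : T → Y} (hF : StronglyMeasurable F)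
    {r : ℝ} (hr : 0 < r) :
    ∃ (P : MPartition (univ : Set T)) (y : ℕ → Y), ∀ n, P.piece n ⊆ F ⁻¹' Metric.ball (y n) r := by
  borelize Y
  obtain ⟨D, hDc, hD⟩ := hF.isSeparable_range
  obtain ⟨y, hDy⟩ := countable_iff_exists_subset_range.1 hDc
  have hcover : ⋃ n, F ⁻¹' Metric.ball (y n) r = univ := by
    refine eq_univ_of_forall fun u => ?_
    obtain ⟨z, hz, hFz⟩ := Metric.mem_closure_iff.1 (hD (mem_range_self u)) r hr
    obtain ⟨n, rfl⟩ := hDy hz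
    exact mem_iUnion.2 ⟨n, hFz⟩
  exact ⟨.ofDisjointed _ (fun n => hF.measurable Metric.isOpen_ball.measurableSet) hcover, y,
    disjointed_subset _⟩

theorem exists_mpartition_abs_mul_norm_sub_le [SeminormedAddCommGroup X] {f : T → ℝ}
    (hf : Measurable f) {F : T → X} (hF : StronglyMeasurable F) {δ : ℝ} (hδ : 0 < δ) :
    ∃ P : MPartition (univ : Set T),
      ∀ n, ∀ u ∈ P.piece n, ∀ s ∈ P.piece n, |f u| * ‖F s - F u‖ ≤ δ := by
  obtain ⟨P, y, hPy⟩ := hf.stronglyMeasurable.exists_mpartition_subset_preimage_ball one_pos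
  choose Q x hQx using fun m =>
    hF.exists_mpartition_subset_preimage_ball (r := δ / (2 * (|y m| + 1))) (by positivity)
  refine ⟨P.bind Q, fun n u hu s hs => ?_⟩
  set m := n.unpair.1
  have hfu : |f u| ≤ |y m| + 1 := by
    have := Metric.mem_ball.1 (hPy m hu.1)
    rw [Real.dist_eq] at this
    linarith [abs_sub_abs_le_abs_sub (f u) (y m)]
  have hFsu : ‖F s - F u‖ ≤ δ / (|y m| + 1) := by
    have hs' := Metric.mem_ball.1 (hQx m _ hs.2)
    have hu' := Metric.mem_ball.1 (hQx m _ hu.2)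
    rw [← dist_eq_norm]
    calc dist (F s) (F u) ≤ dist (F s) (x m n.unpair.2) + dist (F u) (x m n.unpair.2) :=
          dist_triangle_right _ _ _
      _ ≤ 2 * (δ / (2 * (|y m| + 1))) := by linarith
      _ = δ / (|y m| + 1) := by field_simp
  calc |f u| * ‖F s - F u‖ ≤ (|y m| + 1) * (δ / (|y m| + 1)) :=
        mul_le_mul hfu hFsu (norm_nonneg _) (by positivity)
    _ = δ := mul_div_cancel₀ _ (by positivity)

namespace B1IntegralOn

variable [NormedAddCommGroup X] [NormedSpace ℝ X] [Nonempty T] {μ : Measure T}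
  [IsFiniteMeasure μ] {F : T → X} {A : Set T} {I : X}

theorem norm_sub_smul_le (hI : B1IntegralOn F μ A I) (x : X) {δ : ℝ} (hδ : 0 ≤ δ)
    (hx : ∀ s ∈ A, ‖F s - x‖ ≤ δ) :
    ‖I - (μ A).toReal • x‖ ≤ δ * (μ A).toReal := by
  refine le_of_forall_pos_le_add fun η hη => ?_
  obtain ⟨P, hP⟩ := hI (η / 3) (by positivity)
  obtain ⟨s, hs⟩ := P.exists_isTagging
  set w : ℕ → ℝ := fun i => (μ (P.piece i)).toReal
  set σ : ℕ → ℝ := fun n => ∑ i ∈ Finset.range n, w i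
  set S : ℕ → X := fun n => ∑ i ∈ Finset.range n, w i • F (s i)
  -- an empty piece has weight `0`, so its tag does not matter
  have hw (i : ℕ) : w i * ‖F (s i) - x‖ ≤ w i * δ := by
    rcases (P.piece i).eq_empty_or_nonempty with he | hne
    · simp [w, he]
    · exact mul_le_mul_of_nonneg_left (hx _ (P.piece_subset i (hs i hne))) ENNReal.toReal_nonneg
  have hSσ (n : ℕ) : ‖S n - σ n • x‖ ≤ δ * (μ A).toReal :=
    calc ‖S n - σ n • x‖ = ‖∑ i ∈ Finset.range n, w i • (F (s i) - x)‖ := by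
          simp only [S, σ, Finset.sum_smul, ← Finset.sum_sub_distrib, smul_sub]
      _ ≤ ∑ i ∈ Finset.range n, w i * ‖F (s i) - x‖ := by
          refine (norm_sum_le _ _).trans_eq (Finset.sum_congr rfl fun i _ => ?_)
          rw [norm_smul, Real.norm_of_nonneg ENNReal.toReal_nonneg]
      _ ≤ ∑ i ∈ Finset.range n, w i * δ := Finset.sum_le_sum fun i _ => hw i
      _ = δ * σ n := by rw [← Finset.sum_mul, mul_comm]
      _ ≤ δ * (μ A).toReal := mul_le_mul_of_nonneg_left (P.sum_measure_toReal_le μ n) hδ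
  -- needed because the `limsup` of a real sequence unbounded above is `0`
  have hbdd : IsBoundedUnder (· ≤ ·) atTop fun n => ‖S n - I‖ := by
    refine isBoundedUnder_of ⟨δ * (μ A).toReal + (μ A).toReal * ‖x‖ + ‖I‖, fun n => ?_⟩
    have hσx : ‖σ n • x‖ ≤ (μ A).toReal * ‖x‖ := by
      rw [norm_smul, Real.norm_of_nonneg (Finset.sum_nonneg fun _ _ => ENNReal.toReal_nonneg)]
      exact mul_le_mul_of_nonneg_right (P.sum_measure_toReal_le μ n) (norm_nonneg _)
    have := norm_sub_le (S n) I
    have := norm_le_norm_sub_add (S n) (σ n • x)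
    linarith [hSσ n]
  have hS : ∀ᶠ n in atTop, ‖S n - I‖ < η / 2 :=
    eventually_lt_of_limsup_lt ((hP P (fun j => ⟨j, subset_rfl⟩) s hs).trans_lt (by linarith)) hbdd
  have hσ : ∀ᶠ n in atTop, ‖σ n • x - (μ A).toReal • x‖ < η / 2 := by
    have := ((P.hasSum_measure_toReal μ).tendsto_sum_nat.smul_const x)
    simpa only [dist_eq_norm] using Metric.tendsto_nhds.1 this (η / 2) (by positivity)
  obtain ⟨n, hSn, hσn⟩ := (hS.and hσ).exists
  have h₁ := norm_sub_le_norm_sub_add_norm_sub I (S n) ((μ A).toReal • x)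
  have h₂ := norm_sub_le_norm_sub_add_norm_sub (S n) (σ n • x) ((μ A).toReal • x)
  rw [norm_sub_rev I (S n)] at h₁
  linarith [hSσ n]

theorem norm_smul_sub_smul_le (hI : B1IntegralOn F μ A I) (c : ℝ) (x : X) {δ : ℝ}
    (hδ : 0 ≤ δ) (hx : ∀ s ∈ A, |c| * ‖F s - x‖ ≤ δ) :
    ‖c • ((μ A).toReal • x) - c • I‖ ≤ δ * (μ A).toReal := by
  rcases eq_or_ne c 0 with rfl | hc
  · simpa using mul_nonneg hδ ENNReal.toReal_nonneg
  have hc' : 0 < |c| := abs_pos.2 hc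
  have hosc := hI.norm_sub_smul_le x (div_nonneg hδ hc'.le) fun s hs =>
    (le_div_iff₀' hc').2 (hx s hs)
  calc ‖c • ((μ A).toReal • x) - c • I‖ = |c| * ‖I - (μ A).toReal • x‖ := by
        rw [← smul_sub, norm_smul, Real.norm_eq_abs, norm_sub_rev]
    _ ≤ |c| * (δ / |c| * (μ A).toReal) := mul_le_mul_of_nonneg_left hosc hc'.le
    _ = δ * (μ A).toReal := by field_simp

end B1IntegralOn

end

theorem statement1_general {T X : Type*} [MeasurableSpace T] [NormedAddCommGroup X]
    [NormedSpace ℝ X] (μ : Measure T) [IsFiniteMeasure μ]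
    (f : T → ℝ) (hf : Measurable f)
    (F : T → X) (hF : StronglyMeasurable F)
    (ν : Set T → X)
    (hν : ∀ A : Set T, MeasurableSet A → B1IntegralOn F μ A (ν A)) :
    StronglyMeasurable (fun t => f t • F t) ∧
    ∀ ε > (0 : ℝ), ∃ P₀ : MPartition (Set.univ : Set T),
      ∀ P : MPartition (Set.univ : Set T), P.Finer P₀ →
        ∀ t : ℕ → T, P.IsTagging t →
          ∀ n : ℕ,
            ∑ k ∈ Finset.range n,
              ‖f (t k) • ((μ (P.piece k)).toReal • F (t k)) - f (t k) • ν (P.piece k)‖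
                ≤ 2 * ε := by
  refine ⟨hf.stronglyMeasurable.smul hF, fun ε hε => ?_⟩
  set δ := ε / ((μ univ).toReal + 1)
  have hδ : 0 < δ := by positivity
  obtain ⟨P₀, hP₀⟩ := exists_mpartition_abs_mul_norm_sub_le hf hF hδ
  refine ⟨P₀, fun P hP t ht n => ?_⟩
  have : Nonempty T := ⟨t 0⟩
  have hosc (k : ℕ) : ∀ s ∈ P.piece k, |f (t k)| * ‖F s - F (t k)‖ ≤ δ := fun s hs => by
    obtain ⟨m, hm⟩ := hP k
    exact hP₀ m _ (hm (ht k ⟨s, hs⟩)) _ (hm hs)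
  calc ∑ k ∈ Finset.range n,
        ‖f (t k) • ((μ (P.piece k)).toReal • F (t k)) - f (t k) • ν (P.piece k)‖
      ≤ ∑ k ∈ Finset.range n, δ * (μ (P.piece k)).toReal := Finset.sum_le_sum fun k _ =>
        (hν _ (P.measurable k)).norm_smul_sub_smul_le _ _ hδ.le (hosc k)
    _ ≤ δ * (μ univ).toReal := by
        rw [← Finset.mul_sum]
        exact mul_le_mul_of_nonneg_left (P.sum_measure_toReal_le μ n) hδ.le
    _ ≤ ε := by
        rw [div_mul_eq_mul_div, div_le_iff₀ (by positivity)]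
        nlinarith [ENNReal.toReal_nonneg (a := μ univ)]
    _ ≤ 2 * ε := by linarith

/-- Remark 1.
If `f : T → ℝ` is measurable and `F` is strongly measurable and `B₁`-integrable on
`T` w.r.t. `μ` (with `M A = ν A = ∫_A F dμ` for every measurable `A`), then the
product `t ↦ f t • F t` is strongly measurable and for every `ε > 0` there is a
countable measurable partition `P₀` of `T` such that for every finer countable
measurable partition `{E_k}` and every choice of tags `t_k ∈ E_k`,
`∑_k ‖f (t_k) F (t_k) μ(E_k) − f (t_k) M(E_k)‖ ≤ 2ε` (expressed via partial sums,
the summands being nonnegative). -/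
theorem statement1 {T X : Type*} [MeasurableSpace T] [NormedAddCommGroup X]
    [NormedSpace ℝ X] (μ : Measure T) [IsFiniteMeasure μ]
    (f : T → ℝ) (hf : Measurable f)
    (F : T → X) (hF : StronglyMeasurable F)
    (ν : Set T → X)
    (hν : ∀ A : Set T, MeasurableSet A → B1IntegralOn F μ A (ν A))
    (hT : B1IntegralOn F μ Set.univ (ν Set.univ)) :
    StronglyMeasurable (fun t => f t • F t) ∧
    ∀ ε > (0 : ℝ), ∃ P₀ : MPartition (Set.univ : Set T),
      ∀ P : MPartition (Set.univ : Set T), P.Finer P₀ →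
        ∀ t : ℕ → T, P.IsTagging t →
          ∀ n : ℕ,
            ∑ k ∈ Finset.range n,
              ‖f (t k) • ((μ (P.piece k)).toReal • F (t k)) - f (t k) • ν (P.piece k)‖
                ≤ 2 * ε :=
  statement1_general μ f hf F hF ν hν
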